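/- Let G be a simple graph with maximum degree d, partially properly edge-colored with colors {1,...,d+1}, and let (α, v, x₀, x₁, ..., x_k) be a c-fan with c(v xᵢ) = βᵢ for 1 ≤ i ≤ k. For any 0 ≤ j ≤ k, the 'shift from x_j' operation—setting c(v x_{i-1}) := β_i for i = 1,...,j and uncoloring v x_j—produces a partial proper edge-coloring in which the edge v x_j is uncolored, the set of missing colors at v is unchanged, and (α, v, x_j, x_{j+1}, ..., x_k) is again a c-fan. -/

import Mathlib

/-!
Shifting only moves colors along the fan: the colors `β₁, …, β_j` move from the edges
`v x₁, …, v x_j` to `v x₀, …, v x_{j-1}`, so the colors present at `v` do not change, and the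
color `βᵢ₊₁` newly placed on `v xᵢ` was missing at `xᵢ`. Properness survives because the fan
colors `βᵢ` are pairwise distinct, all of them being used at `v`.
-/

/-- Color `γ` is missing at vertex `u`: no colored edge incident to `u` has color `γ`. -/
def MissingAt {V : Type*} {N : ℕ} (G : SimpleGraph V) (c : Sym2 V → Option (Fin N))
    (γ : Fin N) (u : V) : Prop :=
  ∀ w, G.Adj u w → c s(u, w) ≠ some γ

/-- Partial edge colorings are maps `Sym2 V → Option (Fin N)`, with `none` meaning uncolored. -/
def IsProperPartialEdgeColoring {V : Type*} {N : ℕ} (G : SimpleGraph V)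
    (c : Sym2 V → Option (Fin N)) : Prop :=
  ∀ u w w' : V, G.Adj u w → G.Adj u w' → w ≠ w' →
    ∀ γ, c s(u, w) = some γ → c s(u, w') ≠ some γ

/-- The c-fan `(α, v, x₀, …, x_k)` with `βᵢ = c(v xᵢ)`; only the indices `i ≤ k` of the
sequences `x` and `β` matter. -/
structure IsCFan {V : Type*} {N : ℕ} (G : SimpleGraph V) (c : Sym2 V → Option (Fin N))
    (α : Fin N) (v : V) (k : ℕ) (x : ℕ → V) (β : ℕ → Fin N) : Prop where
  missingAt_root : MissingAt G c α v
  adj : ∀ i, i ≤ k → G.Adj v (x i)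
  injOn : ∀ i j, i ≤ k → j ≤ k → i ≠ j → x i ≠ x j
  uncolored : c s(v, x 0) = none
  color_eq : ∀ i, 1 ≤ i → i ≤ k → c s(v, x i) = some (β i)
  missingAt : ∀ i, 1 ≤ i → i ≤ k → MissingAt G c (β i) (x (i - 1))

structure IsFanShift {V : Type*} {N : ℕ} (c : Sym2 V → Option (Fin N)) (v : V) (x : ℕ → V)
    (β : ℕ → Fin N) (j : ℕ) (c' : Sym2 V → Option (Fin N)) : Prop where
  recolor : ∀ i, i < j → c' s(v, x i) = some (β (i + 1))
  uncolor : c' s(v, x j) = none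
  eq_of_ne : ∀ e, (∀ i, i ≤ j → e ≠ s(v, x i)) → c' e = c e

section

variable {V : Type*} {N : ℕ} {G : SimpleGraph V} {c c' : Sym2 V → Option (Fin N)}
  {α γ : Fin N} {v : V} {k j : ℕ} {x : ℕ → V} {β : ℕ → Fin N}

namespace IsCFan

theorem color_injective (hF : IsCFan G c α v k x β) (hc : IsProperPartialEdgeColoring G c)
    {m m' : ℕ} (hm : 1 ≤ m) (hmk : m ≤ k) (hm' : 1 ≤ m') (hmk' : m' ≤ k) (h : β m = β m') :
    m = m' := by
  by_contra hne
  exact hc v (x m) (x m') (hF.adj m hmk) (hF.adj m' hmk') (hF.injOn m m' hmk hmk' hne) (β m)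
    (hF.color_eq m hm hmk) (h ▸ hF.color_eq m' hm' hmk')

/-- At `v` the color `βₘ₊₁` sits on `v xₘ₊₁`, and at `xₘ` it is missing. -/
theorem color_ne_of_adj_fan_edge (hF : IsCFan G c α v k x β)
    (hc : IsProperPartialEdgeColoring G c) {m : ℕ} (hm : m < k) {u w w' : V}
    (he : s(u, w) = s(v, x m)) (hw' : G.Adj u w') (hne : s(u, w') ≠ s(v, x (m + 1))) :
    c s(u, w') ≠ some (β (m + 1)) := by
  rcases Sym2.eq_iff.mp he with ⟨rfl, -⟩ | ⟨rfl, -⟩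
  · have hw'x : x (m + 1) ≠ w' := fun h => hne (h ▸ rfl)
    exact hc u (x (m + 1)) w' (hF.adj (m + 1) hm) hw' hw'x (β (m + 1))
      (hF.color_eq (m + 1) le_add_self hm)
  · exact hF.missingAt (m + 1) le_add_self hm w' hw'

end IsCFan

namespace IsFanShift

theorem eq_some (hS : IsFanShift c v x β j c') {e : Sym2 V} (h : c' e = some γ) :
    ((∀ i, i ≤ j → e ≠ s(v, x i)) ∧ c e = some γ) ∨
      ∃ m < j, e = s(v, x m) ∧ γ = β (m + 1) := by
  by_cases hfan : ∀ i, i ≤ j → e ≠ s(v, x i)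
  · exact Or.inl ⟨hfan, hS.eq_of_ne e hfan ▸ h⟩
  push Not at hfan
  obtain ⟨m, hm, rfl⟩ := hfan
  rcases hm.lt_or_eq with hlt | rfl
  · rw [hS.recolor m hlt, Option.some.injEq] at h
    exact Or.inr ⟨m, hlt, rfl, h.symm⟩
  · simp [hS.uncolor] at h

theorem isProperPartialEdgeColoring (hS : IsFanShift c v x β j c') (hF : IsCFan G c α v k x β)
    (hc : IsProperPartialEdgeColoring G c) (hj : j ≤ k) :
    IsProperPartialEdgeColoring G c' := by
  intro u w w' hw hw' hne γ h h'
  rcases hS.eq_some h with ⟨hfan, hcw⟩ | ⟨m, hm, he, rfl⟩ <;>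
    rcases hS.eq_some h' with ⟨hfan', hcw'⟩ | ⟨m', hm', he', hβ⟩
  · exact hc u w w' hw hw' hne γ hcw hcw'
  · subst hβ
    exact hF.color_ne_of_adj_fan_edge hc (by omega) he' hw (hfan (m' + 1) (by omega)) hcw
  · exact hF.color_ne_of_adj_fan_edge hc (by omega) he hw' (hfan' (m + 1) (by omega)) hcw'
  · obtain rfl : m = m' := by
      simpa using hF.color_injective hc (by omega) (by omega) (by omega) (by omega) hβ
    exact hne (Sym2.congr_right.mp (he.trans he'.symm))

theorem missingAt_root_iff (hS : IsFanShift c v x β j c') (hF : IsCFan G c α v k x β)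
    (hj : j ≤ k) (γ : Fin N) : MissingAt G c γ v ↔ MissingAt G c' γ v := by
  constructor
  · intro h w hw hcw
    rcases hS.eq_some hcw with ⟨-, hcw⟩ | ⟨m, hm, -, rfl⟩
    · exact h w hw hcw
    · exact h (x (m + 1)) (hF.adj (m + 1) (by omega)) (hF.color_eq (m + 1) le_add_self (by omega))
  · intro h w hw hcw
    by_cases hwx : ∃ m ≤ j, w = x m
    · obtain ⟨m | m, hm, rfl⟩ := hwx
      · simp [hF.uncolored] at hcw
      · rw [hF.color_eq (m + 1) le_add_self (by omega), Option.some.injEq] at hcw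
        exact h (x m) (hF.adj m (by omega)) (hcw ▸ hS.recolor m (by omega))
    · have hfan : ∀ i, i ≤ j → s(v, w) ≠ s(v, x i) :=
        fun i hi he => hwx ⟨i, hi, Sym2.congr_right.mp he⟩
      exact h w hw ((hS.eq_of_ne _ hfan).trans hcw)

theorem color_eq_of_lt (hS : IsFanShift c v x β j c') (hF : IsCFan G c α v k x β) {i : ℕ}
    (hji : j < i) (hik : i ≤ k) : c' s(v, x i) = some (β i) := by
  have hfan : ∀ m, m ≤ j → s(v, x i) ≠ s(v, x m) := fun m hm he =>
    hF.injOn i m hik (by omega) (by omega) (Sym2.congr_right.mp he)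
  rw [hS.eq_of_ne _ hfan]
  exact hF.color_eq i (by omega) hik

theorem missingAt_of_lt (hS : IsFanShift c v x β j c') (hF : IsCFan G c α v k x β)
    (hc : IsProperPartialEdgeColoring G c) {i : ℕ} (hji : j < i) (hik : i ≤ k) :
    MissingAt G c' (β i) (x (i - 1)) := by
  intro w hw hcw
  rcases hS.eq_some hcw with ⟨-, hcw⟩ | ⟨m, hm, -, hβ⟩
  · exact hF.missingAt i (by omega) hik w hw hcw
  · have := hF.color_injective hc (by omega) hik (by omega) (by omega) hβ
    omega

end IsFanShift

end

/-- Shifting a c-fan (α, v, x₀, …, x_k) from x_j (recoloring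
v x_{i-1} with β_i for 1 ≤ i ≤ j and uncoloring v x_j) produces a partial proper
edge-coloring in which v x_j is uncolored, the missing colors at v are unchanged,
and (α, v, x_j, …, x_k) is again a c-fan. -/
theorem stmt_18 {V : Type*} (G : SimpleGraph V) (d : ℕ)
    (c : Sym2 V → Option (Fin (d + 1)))
    (hproper : ∀ u w w' : V, G.Adj u w → G.Adj u w' → w ≠ w' →
      ∀ γ, c s(u, w) = some γ → c s(u, w') ≠ some γ)
    (α : Fin (d + 1)) (v : V) (k : ℕ) (x : ℕ → V) (β : ℕ → Fin (d + 1))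
    (hαv : MissingAt G c α v)
    (hadj : ∀ i, i ≤ k → G.Adj v (x i))
    (hinj : ∀ i j, i ≤ k → j ≤ k → i ≠ j → x i ≠ x j)
    (h0 : c s(v, x 0) = none)
    (hcol : ∀ i, 1 ≤ i → i ≤ k → c s(v, x i) = some (β i))
    (hmiss : ∀ i, 1 ≤ i → i ≤ k → MissingAt G c (β i) (x (i - 1)))
    (j : ℕ) (hj : j ≤ k)
    (c' : Sym2 V → Option (Fin (d + 1)))
    (hs1 : ∀ i, 1 ≤ i → i ≤ j → c' s(v, x (i - 1)) = some (β i))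
    (hs2 : c' s(v, x j) = none)
    (hs3 : ∀ e : Sym2 V, (∀ i, i ≤ j → e ≠ s(v, x i)) → c' e = c e) :
    (∀ u w w' : V, G.Adj u w → G.Adj u w' → w ≠ w' →
      ∀ γ, c' s(u, w) = some γ → c' s(u, w') ≠ some γ) ∧
    c' s(v, x j) = none ∧
    (∀ γ : Fin (d + 1), MissingAt G c γ v ↔ MissingAt G c' γ v) ∧
    (∀ i, j < i → i ≤ k → c' s(v, x i) = some (β i)) ∧
    (∀ i, j < i → i ≤ k → MissingAt G c' (β i) (x (i - 1))) ∧
    MissingAt G c' α v := by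
  have hF : IsCFan G c α v k x β := ⟨hαv, hadj, hinj, h0, hcol, hmiss⟩
  have hS : IsFanShift c v x β j c' :=
    ⟨fun i hi => hs1 (i + 1) le_add_self hi, hs2, hs3⟩
  exact ⟨hS.isProperPartialEdgeColoring hF hproper hj, hs2, hS.missingAt_root_iff hF hj,
    fun _ => hS.color_eq_of_lt hF, fun _ => hS.missingAt_of_lt hF hproper,
    (hS.missingAt_root_iff hF hj α).mp hF.missingAt_root⟩
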